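/- Assume σ ≠ 0. The conditional expectation of the number of old blocks re-observed, given complete information, satisfies E[R | π] = j − Σ_{i=1}^{n} m_i·Σ_{k=0}^{m} (V_{n+m,j+k}/V_{n,j})·C(m, k; σ, −n + i + (j−1)σ)/σ^k. -/

import Mathlib

open Finset

attribute [local instance] Classical.propDecidable

noncomputable section

/-- Rising factorial `x(x+1)⋯(x+N−1)`. -/
def risingFac (x : ℝ) (N : ℕ) : ℝ := ∏ i ∈ Finset.range N, (x + i)

/-- Falling factorial `x(x−1)⋯(x−N+1)`. -/
def fallingFac (x : ℝ) (N : ℕ) : ℝ := ∏ i ∈ Finset.range N, (x - i)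

/-- Noncentral generalized factorial coefficient `C(N,k;σ,γ)`. -/
def gfc (N k : ℕ) (σ γ : ℝ) : ℝ :=
  (1 / (Nat.factorial k : ℝ)) *
    ∑ i ∈ Finset.range (k + 1),
      (-1 : ℝ) ^ i * (Nat.choose k i : ℝ) * risingFac (-(i : ℝ) * σ - γ) N

/-- Central generalized factorial coefficient `C(N,k;σ)`. -/
def cgfc (N k : ℕ) (σ : ℝ) : ℝ := gfc N k σ 0

/-- Binomial coefficient over `ℤ`, zero unless `0 ≤ b ≤ a`. -/
def ibinom (a b : ℤ) : ℝ :=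
  if 0 ≤ b ∧ b ≤ a then (Nat.choose a.toNat b.toNat : ℝ) else 0

/-- Multinomial coefficient `m!/((l!)^r (m−rl)!)`, zero if `rl > m`. -/
def multinom (m l r : ℕ) : ℝ :=
  if r * l ≤ m then
    (Nat.factorial m : ℝ) / ((Nat.factorial l : ℝ) ^ r * (Nat.factorial (m - r * l) : ℝ))
  else 0

/-- `P` is a set partition of the finset `s`. -/
def IsPartOn {α : Type*} (s : Finset α) (P : Finset (Finset α)) : Prop :=
  (∀ B ∈ P, B ⊆ s) ∧ ∅ ∉ P ∧ ∀ a ∈ s, ∃! B, B ∈ P ∧ a ∈ B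

/-- Restriction of a partition to `s`. -/
def restrictPart {α : Type*} [DecidableEq α] (P : Finset (Finset α)) (s : Finset α) :
    Finset (Finset α) := (P.image fun C => C ∩ s).erase ∅

/-- Gibbs probability of a partition with block sizes `|C|` and `VN k` the Gibbs weight. -/
def gibbsW {α : Type*} (σ : ℝ) (VN : ℕ → ℝ) (P : Finset (Finset α)) : ℝ :=
  VN P.card * ∏ C ∈ P, risingFac (1 - σ) (C.card - 1)

/-- Ewens–Pitman weight system. -/
def EPV (σ θ : ℝ) : ℕ → ℕ → ℝ :=
  fun N k => (∏ i ∈ Finset.range k, (θ + (i : ℝ) * σ)) / risingFac θ N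

/-- The "old" elements `{1,…,n}` inside `{1,…,n+m}`. -/
def oldSet (n m : ℕ) : Finset (Fin (n + m)) :=
  Finset.univ.filter fun x => (x : ℕ) < n

/-- Number of new elements in the block of `ρ` containing the old block `Bi`. -/
def Scount (n m : ℕ) (Bi : Finset (Fin (n + m))) (ρ : Finset (Finset (Fin (n + m)))) : ℕ :=
  ∑ C ∈ ρ.filter (fun C => Bi ⊆ C), (C \ oldSet n m).card

/-- Partitions of `{1,…,n+m}` extending the partition `πP` of the old elements. -/
def extensions (n m : ℕ) (πP : Finset (Finset (Fin (n + m)))) :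
    Finset (Finset (Finset (Fin (n + m)))) :=
  Finset.univ.filter fun ρ => IsPartOn Finset.univ ρ ∧ restrictPart ρ (oldSet n m) = πP

/-- Conditional expectation given complete information (the initial partition `πP`). -/
def condExpPi (σ : ℝ) (V : ℕ → ℕ → ℝ) (n m : ℕ) (πP : Finset (Finset (Fin (n + m))))
    (f : Finset (Finset (Fin (n + m))) → ℝ) : ℝ :=
  (∑ ρ ∈ extensions n m πP, f ρ * gibbsW σ (V (n + m)) ρ) /
    (∑ ρ ∈ extensions n m πP, gibbsW σ (V (n + m)) ρ)

/-- Partitions of `{1,…,n+m}` whose restriction to the old elements has exactly `j` blocks. -/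
def withJ (n m j : ℕ) : Finset (Finset (Finset (Fin (n + m)))) :=
  Finset.univ.filter fun ρ =>
    IsPartOn Finset.univ ρ ∧ (restrictPart ρ (oldSet n m)).card = j

/-- Partitions of `s` with exactly `j` blocks. -/
def partsJOf {α : Type*} [Fintype α] (s : Finset α) (j : ℕ) :
    Finset (Finset (Finset α)) :=
  Finset.univ.filter fun π' => IsPartOn s π' ∧ π'.card = j

/-- Conditional expectation given the incomplete information `K_n = j`. -/
def condExpK (σ : ℝ) (V : ℕ → ℕ → ℝ) (n m j : ℕ)
    (f : Finset (Finset (Fin (n + m))) → ℝ) : ℝ :=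
  (∑ ρ ∈ withJ n m j, f ρ * gibbsW σ (V (n + m)) ρ) /
    (∑ π' ∈ partsJOf (oldSet n m) j, gibbsW σ (V n) π')

/-- Number of old blocks (indexed by `B`) re-observed in the additional sample. -/
def RcntB (n m j : ℕ) (B : Fin j → Finset (Fin (n + m)))
    (ρ : Finset (Finset (Fin (n + m)))) : ℕ :=
  (Finset.univ.filter fun i : Fin j => Scount n m (B i) ρ ≠ 0).card

/-- Number of old blocks (indexed by `B`) re-observed with frequency `l`. -/
def RlcntB (n m j l : ℕ) (B : Fin j → Finset (Fin (n + m)))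
    (ρ : Finset (Finset (Fin (n + m)))) : ℕ :=
  (Finset.univ.filter fun i : Fin j => Scount n m (B i) ρ = l).card

/-- Number of blocks of the restriction whose containing block has a new element. -/
def Rcnt (n m : ℕ) (ρ : Finset (Finset (Fin (n + m)))) : ℕ :=
  ((restrictPart ρ (oldSet n m)).filter fun Bi =>
    ∃ C ∈ ρ, Bi ⊆ C ∧ (C \ oldSet n m) ≠ ∅).card

/-- Number of blocks of the restriction whose containing block has exactly `l` new elements. -/
def Rlcnt (n m l : ℕ) (ρ : Finset (Finset (Fin (n + m)))) : ℕ :=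
  ((restrictPart ρ (oldSet n m)).filter fun Bi =>
    ∃ C ∈ ρ, Bi ⊆ C ∧ (C \ oldSet n m).card = l).card

/-- Number of bijections from `Fin j` onto the blocks of `π'` satisfying `Q`. -/
def bijCount {α : Type*} [Fintype α] (j : ℕ) (π' : Finset (Finset α))
    (Q : (Fin j → Finset α) → Prop) : ℕ :=
  ((Finset.univ : Finset (Fin j → Finset α)).filter fun β =>
    Function.Injective β ∧ Finset.image β Finset.univ = π' ∧ Q β).card

/-- Conditional expectation given almost-complete information. -/
def condExpTau (σ : ℝ) (V : ℕ → ℕ → ℝ) (n m j p : ℕ) (τ : Fin p → Fin j) (nτ : Fin p → ℕ)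
    (f : Finset (Finset (Fin (n + m))) → ℝ) : ℝ :=
  (∑ ρ ∈ withJ n m j,
      (bijCount j (restrictPart ρ (oldSet n m)) (fun β => ∀ i, (β (τ i)).card = nτ i) : ℝ) *
        f ρ * gibbsW σ (V (n + m)) ρ) /
    (∑ π' ∈ partsJOf (oldSet n m) j,
      (bijCount j π' (fun β => ∀ i, (β (τ i)).card = nτ i) : ℝ) * gibbsW σ (V n) π')

/-!
Every extension `ρ` of `π` to the new elements arises by adding them one at a time, each one
either opening a new block or joining a block `C`; the latter multiplies the block weight
`∏ (1 - σ)_{(|C| - 1)↑}` by `|C| - σ`. Summed over the blocks of a partition of `N` elements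
these factors give `N - |ρ| σ`, so the recursion of `V` collapses the total Gibbs weight of the
extensions to `V n j · ∏_π (1 - σ)_{(n_i - 1)↑}`. An old block `B_i` is not re-observed exactly
when it is itself a block of `ρ`. Freezing `B_i`, the total weight of the extensions with
`j + k` blocks satisfies the recursion of `C(m, k; σ, γ_i) / σ^k` with
`γ_i = -n + n_i + (j - 1) σ`, whence
`E[R | π] = j - ∑_i ∑_k V (n + m) (j + k) / V n j · C(m, k; σ, γ_i) / σ^k`;
grouping the blocks by size gives the formula.
-/

lemma sum_eq_sum_card_fiber_mul {ι κ : Type*} [DecidableEq κ] {s : Finset ι} {t : Finset κ}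
    {g : ι → κ} (hg : ∀ i ∈ s, g i ∈ t) (f : κ → ℝ) :
    ∑ i ∈ s, f (g i) = ∑ b ∈ t, ((s.filter fun i => g i = b).card : ℝ) * f b := by
  rw [← Finset.sum_fiberwise_of_maps_to hg]
  refine Finset.sum_congr rfl fun b _ => ?_
  rw [Finset.sum_congr rfl fun i hi => by rw [(Finset.mem_filter.mp hi).2], Finset.sum_const,
    nsmul_eq_mul]

section Partitions

variable {α : Type*} [DecidableEq α]

def partsOn [Fintype α] (s : Finset α) : Finset (Finset (Finset α)) :=
  Finset.univ.filter fun P => IsPartOn s P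

omit [DecidableEq α] in
lemma mem_partsOn [Fintype α] {s : Finset α} {P : Finset (Finset α)} :
    P ∈ partsOn s ↔ IsPartOn s P := by
  simp [partsOn]

namespace IsPartOn

variable {s : Finset α} {P : Finset (Finset α)}

omit [DecidableEq α] in
lemma nonempty_of_mem (h : IsPartOn s P) {C : Finset α} (hC : C ∈ P) : C.Nonempty :=
  Finset.nonempty_iff_ne_empty.mpr fun hC0 => h.2.1 (hC0 ▸ hC)

omit [DecidableEq α] in
lemma eq_of_mem_of_mem (h : IsPartOn s P) {C D : Finset α} (hC : C ∈ P) (hD : D ∈ P)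
    {a : α} (haC : a ∈ C) (haD : a ∈ D) : C = D :=
  (h.2.2 a (h.1 C hC haC)).unique ⟨hC, haC⟩ ⟨hD, haD⟩

omit [DecidableEq α] in
lemma of_cover_of_eq (hsub : ∀ B ∈ P, B ⊆ s)
    (hempty : ∅ ∉ P) (hcover : ∀ a ∈ s, ∃ B ∈ P, a ∈ B)
    (hdisj : ∀ B ∈ P, ∀ D ∈ P, ∀ a ∈ B, a ∈ D → B = D) : IsPartOn s P :=
  ⟨hsub, hempty, fun a ha =>
    let ⟨B, hB, haB⟩ := hcover a ha
    ⟨B, ⟨hB, haB⟩, fun D ⟨hD, haD⟩ => hdisj D hD B hB a haD haB⟩⟩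

lemma sum_card (h : IsPartOn s P) : ∑ C ∈ P, C.card = s.card := by
  have hdisj : (P : Set (Finset α)).PairwiseDisjoint id := fun C hC D hD hne =>
    Finset.disjoint_left.mpr fun a haC haD => hne (h.eq_of_mem_of_mem hC hD haC haD)
  have hunion : P.biUnion id = s := by
    ext a
    simp only [Finset.mem_biUnion, id]
    exact ⟨fun ⟨C, hC, haC⟩ => h.1 C hC haC,
      fun ha => let ⟨C, ⟨hC, haC⟩, _⟩ := h.2.2 a ha; ⟨C, hC, haC⟩⟩
  rw [← hunion, Finset.card_biUnion hdisj]
  rfl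

lemma card_le (h : IsPartOn s P) : P.card ≤ s.card := by
  simpa [h.sum_card] using
    Finset.card_nsmul_le_sum P Finset.card 1 fun C hC => (h.nonempty_of_mem hC).card_pos

omit [DecidableEq α] in
lemma card_pos (h : IsPartOn s P) (hs : s.Nonempty) : 0 < P.card :=
  let ⟨a, ha⟩ := hs
  let ⟨C, ⟨hC, _⟩, _⟩ := h.2.2 a ha
  Finset.card_pos.mpr ⟨C, hC⟩

lemma restrict {u : Finset α} {ρ : Finset (Finset α)} (h : IsPartOn u ρ) (hs : s ⊆ u) :
    IsPartOn s (restrictPart ρ s) := by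
  refine ⟨?_, Finset.notMem_erase _ _, fun a ha => ?_⟩
  · intro C hC
    obtain ⟨D, -, rfl⟩ := Finset.mem_image.mp (Finset.mem_of_mem_erase hC)
    exact Finset.inter_subset_right
  · obtain ⟨D, ⟨hD, haD⟩, -⟩ := h.2.2 a (hs ha)
    have haDs : a ∈ D ∩ s := Finset.mem_inter.mpr ⟨haD, ha⟩
    refine ⟨D ∩ s, ⟨Finset.mem_erase.mpr ⟨Finset.ne_empty_of_mem haDs,
      Finset.mem_image_of_mem _ hD⟩, haDs⟩, ?_⟩
    rintro E ⟨hE, haE⟩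
    obtain ⟨D', hD', rfl⟩ := Finset.mem_image.mp (Finset.mem_of_mem_erase hE)
    rw [h.eq_of_mem_of_mem hD' hD (Finset.mem_inter.mp haE).1 haD]

end IsPartOn

lemma restrictPart_self {s : Finset α} {P : Finset (Finset α)} (h : IsPartOn s P) :
    restrictPart P s = P := by
  unfold restrictPart
  rw [Finset.image_congr (f := fun C => C ∩ s) (g := id) fun C hC =>
      Finset.inter_eq_left.mpr (h.1 C hC), Finset.image_id, Finset.erase_eq_of_notMem h.2.1]

end Partitions

section AddToBlock

variable {α : Type*} [DecidableEq α]

/-- `x` joins the block `C` of `ρ`; `C = ∅` encodes the new singleton block `{x}`. -/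
def addToBlock (ρ : Finset (Finset α)) (x : α) (C : Finset α) : Finset (Finset α) :=
  insert (insert x C) (ρ.erase C)

variable {s : Finset α} {ρ : Finset (Finset α)} {x : α} {C : Finset α}

lemma inter_eq_erase_of_subset_insert (hC : C ⊆ insert x s) (hx : x ∉ s) :
    C ∩ s = C.erase x := by
  ext a
  simp only [Finset.mem_inter, Finset.mem_erase]
  exact ⟨fun ⟨haC, has⟩ => ⟨fun hax => hx (hax ▸ has), haC⟩,
    fun ⟨hax, haC⟩ => ⟨haC, (Finset.mem_insert.mp (hC haC)).resolve_left hax⟩⟩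

lemma isPartOn_addToBlock (h : IsPartOn s ρ) (hx : x ∉ s) (hC : C ∈ insert ∅ ρ) :
    IsPartOn (insert x s) (addToBlock ρ x C) := by
  have hCs : C ⊆ s := by
    rcases Finset.mem_insert.mp hC with rfl | hC
    · exact Finset.empty_subset s
    · exact h.1 C hC
  have hxρ : ∀ D ∈ ρ, x ∉ D := fun D hD hxD => hx (h.1 D hD hxD)
  have hmixed : ∀ D ∈ ρ.erase C, ∀ a ∈ insert x C, a ∉ D := by
    intro D hD a haC haD
    have hD' := Finset.mem_of_mem_erase hD
    rcases Finset.mem_insert.mp haC with rfl | haC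
    · exact hxρ D hD' haD
    · have hCρ : C ∈ ρ := (Finset.mem_insert.mp hC).resolve_left (Finset.ne_empty_of_mem haC)
      exact Finset.ne_of_mem_erase hD (h.eq_of_mem_of_mem hD' hCρ haD haC)
  refine IsPartOn.of_cover_of_eq ?_ ?_ ?_ ?_
  · intro D hD
    rcases Finset.mem_insert.mp hD with rfl | hD
    · exact Finset.insert_subset_insert x hCs
    · exact (h.1 D (Finset.mem_of_mem_erase hD)).trans (Finset.subset_insert x s)
  · intro h0
    rcases Finset.mem_insert.mp h0 with h0 | h0
    · exact Finset.insert_ne_empty x C h0.symm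
    · exact h.2.1 (Finset.mem_of_mem_erase h0)
  · intro a ha
    rcases Finset.mem_insert.mp ha with rfl | ha
    · exact ⟨insert a C, Finset.mem_insert_self _ _, Finset.mem_insert_self _ _⟩
    · obtain ⟨D, ⟨hD, haD⟩, -⟩ := h.2.2 a ha
      by_cases hDC : D = C
      · exact ⟨insert x C, Finset.mem_insert_self _ _, Finset.mem_insert_of_mem (hDC ▸ haD)⟩
      · exact ⟨D, Finset.mem_insert_of_mem (Finset.mem_erase.mpr ⟨hDC, hD⟩), haD⟩
  · intro B hB D hD a haB haD
    rcases Finset.mem_insert.mp hB with rfl | hB <;> rcases Finset.mem_insert.mp hD with rfl | hD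
    · rfl
    · exact absurd haD (hmixed D hD a haB)
    · exact absurd haB (hmixed B hB a haD)
    · exact h.eq_of_mem_of_mem (Finset.mem_of_mem_erase hB) (Finset.mem_of_mem_erase hD) haB haD

lemma restrictPart_addToBlock {t : Finset α} (hempty : ∅ ∉ ρ) (hx : x ∉ t)
    (hC : C ∈ insert ∅ ρ) : restrictPart (addToBlock ρ x C) t = restrictPart ρ t := by
  unfold addToBlock restrictPart
  rw [Finset.image_insert, Finset.insert_inter_of_notMem hx]
  rcases Finset.mem_insert.mp hC with rfl | hC
  · rw [Finset.erase_eq_of_notMem hempty, Finset.empty_inter, Finset.erase_insert_eq_erase]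
  · conv_rhs => rw [← Finset.insert_erase hC, Finset.image_insert]

lemma IsPartOn.filter_sameBlock {ρ' : Finset (Finset α)} (h : IsPartOn (insert x s) ρ')
    (hx : x ∉ s) {C₀ : Finset α} (hC₀ : C₀ ∈ ρ') (hxC₀ : x ∈ C₀) :
    s.filter (fun a => ∃ D ∈ ρ', x ∈ D ∧ a ∈ D) = C₀.erase x := by
  ext a
  simp only [Finset.mem_filter, Finset.mem_erase]
  constructor
  · rintro ⟨ha, D, hD, hxD, haD⟩
    exact ⟨fun hax => hx (hax ▸ ha), h.eq_of_mem_of_mem hD hC₀ hxD hxC₀ ▸ haD⟩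
  · rintro ⟨hax, haC₀⟩
    exact ⟨(Finset.mem_insert.mp (h.1 C₀ hC₀ haC₀)).resolve_left hax, C₀, hC₀, hxC₀, haC₀⟩

lemma addToBlock_restrictPart {ρ' : Finset (Finset α)} (h : IsPartOn (insert x s) ρ')
    (hx : x ∉ s) {C₀ : Finset α} (hC₀ : C₀ ∈ ρ') (hxC₀ : x ∈ C₀) :
    addToBlock (restrictPart ρ' s) x (C₀.erase x) = ρ' := by
  have hrest : ∀ D ∈ ρ'.erase C₀, D ∩ s = D := fun D hD =>
    Finset.inter_eq_left.mpr fun a haD => (Finset.mem_insert.mp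
      (h.1 D (Finset.mem_of_mem_erase hD) haD)).resolve_left fun hax =>
        Finset.ne_of_mem_erase hD (h.eq_of_mem_of_mem (Finset.mem_of_mem_erase hD) hC₀
          (hax ▸ haD) hxC₀)
  have hfresh : C₀.erase x ∉ ρ'.erase C₀ := by
    intro hmem
    obtain ⟨a, ha⟩ := h.nonempty_of_mem (Finset.mem_of_mem_erase hmem)
    exact Finset.ne_of_mem_erase hmem
      (h.eq_of_mem_of_mem (Finset.mem_of_mem_erase hmem) hC₀ ha (Finset.mem_of_mem_erase ha))
  have himage : ρ'.image (· ∩ s) = insert (C₀.erase x) (ρ'.erase C₀) := by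
    conv_lhs => rw [← Finset.insert_erase hC₀]
    rw [Finset.image_insert, inter_eq_erase_of_subset_insert (h.1 C₀ hC₀) hx,
      Finset.image_congr (g := id) hrest, Finset.image_id]
  unfold addToBlock restrictPart
  rw [himage, Finset.erase_right_comm, Finset.erase_insert hfresh,
    Finset.erase_eq_of_notMem fun h0 => h.2.1 (Finset.mem_of_mem_erase h0),
    Finset.insert_erase hxC₀, Finset.insert_erase hC₀]

/-- A partition of `insert x s` is the same as a partition of `s` together with the block that
`x` joins. -/
lemma sum_partsOn_insert [Fintype α] {β : Type*} [AddCommMonoid β] (hx : x ∉ s)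
    (F : Finset (Finset α) → β) :
    ∑ ρ' ∈ partsOn (insert x s), F ρ' =
      ∑ ρ ∈ partsOn s, ∑ C ∈ insert ∅ ρ, F (addToBlock ρ x C) := by
  have hblock : ∀ ρ' ∈ partsOn (insert x s), ∃ C₀ ∈ ρ', x ∈ C₀ := fun ρ' hρ' =>
    let ⟨C₀, ⟨hC₀, hxC₀⟩, _⟩ := (mem_partsOn.mp hρ').2.2 x (Finset.mem_insert_self x s)
    ⟨C₀, hC₀, hxC₀⟩
  have hinv : ∀ ρ' ∈ partsOn (insert x s),
      addToBlock (restrictPart ρ' s) x (s.filter fun a => ∃ D ∈ ρ', x ∈ D ∧ a ∈ D) = ρ' := by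
    intro ρ' hρ'
    obtain ⟨C₀, hC₀, hxC₀⟩ := hblock ρ' hρ'
    have h := mem_partsOn.mp hρ'
    rw [h.filter_sameBlock hx hC₀ hxC₀, addToBlock_restrictPart h hx hC₀ hxC₀]
  rw [Finset.sum_sigma']
  refine Finset.sum_nbij'
    (fun ρ' => ⟨restrictPart ρ' s, s.filter fun a => ∃ D ∈ ρ', x ∈ D ∧ a ∈ D⟩)
    (fun p => addToBlock p.1 x p.2) ?_ ?_ hinv ?_ fun ρ' hρ' => by rw [hinv ρ' hρ']
  · intro ρ' hρ'
    obtain ⟨C₀, hC₀, hxC₀⟩ := hblock ρ' hρ'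
    have h := mem_partsOn.mp hρ'
    refine Finset.mem_sigma.mpr ⟨mem_partsOn.mpr (h.restrict (Finset.subset_insert x s)), ?_⟩
    rw [h.filter_sameBlock hx hC₀ hxC₀, Finset.mem_insert, or_iff_not_imp_left]
    intro hne
    refine Finset.mem_erase.mpr ⟨hne, Finset.mem_image.mpr ⟨C₀, hC₀, ?_⟩⟩
    exact inter_eq_erase_of_subset_insert (h.1 C₀ hC₀) hx
  · rintro ⟨ρ, C⟩ hp
    obtain ⟨hρ, hC⟩ := Finset.mem_sigma.mp hp
    exact mem_partsOn.mpr (isPartOn_addToBlock (mem_partsOn.mp hρ) hx hC)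
  · rintro ⟨ρ, C⟩ hp
    obtain ⟨hρ, hC⟩ := Finset.mem_sigma.mp hp
    have h := mem_partsOn.mp hρ
    have hxC : x ∉ C := by
      rcases Finset.mem_insert.mp hC with rfl | hC
      · exact Finset.notMem_empty x
      · exact fun hxC => hx (h.1 C hC hxC)
    dsimp only
    rw [(isPartOn_addToBlock h hx hC).filter_sameBlock hx (Finset.mem_insert_self _ _)
        (Finset.mem_insert_self x C), Finset.erase_insert hxC,
      restrictPart_addToBlock h.2.1 hx hC, restrictPart_self h]

end AddToBlock

lemma risingFac_zero (x : ℝ) : risingFac x 0 = 1 := by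
  simp [risingFac]

lemma risingFac_succ (x : ℝ) (N : ℕ) : risingFac x (N + 1) = risingFac x N * (x + N) := by
  simp [risingFac, Finset.prod_range_succ]

lemma risingFac_pos {x : ℝ} (hx : 0 < x) (N : ℕ) : 0 < risingFac x N :=
  Finset.prod_pos fun i _ => by positivity

section Extensions

variable {α : Type*} [DecidableEq α]

def blockWeight (σ : ℝ) (P : Finset (Finset α)) : ℝ :=
  ∏ C ∈ P, risingFac (1 - σ) (C.card - 1)

omit [DecidableEq α] in
lemma gibbsW_eq_mul_blockWeight (σ : ℝ) (VN : ℕ → ℝ) (ρ : Finset (Finset α)) :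
    gibbsW σ VN ρ = VN ρ.card * blockWeight σ ρ :=
  rfl

omit [DecidableEq α] in
lemma blockWeight_pos {σ : ℝ} (hσ : σ < 1) (P : Finset (Finset α)) : 0 < blockWeight σ P :=
  Finset.prod_pos fun _ _ => risingFac_pos (by linarith) _

variable {s : Finset α} {ρ : Finset (Finset α)} {x : α}

lemma addToBlock_empty (hempty : ∅ ∉ ρ) : addToBlock ρ x ∅ = insert {x} ρ := by
  rw [addToBlock, Finset.erase_eq_of_notMem hempty]
  rfl

lemma card_addToBlock_empty (h : IsPartOn s ρ) (hx : x ∉ s) :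
    (addToBlock ρ x ∅).card = ρ.card + 1 := by
  rw [addToBlock_empty h.2.1]
  exact Finset.card_insert_of_notMem fun hxρ => hx (h.1 {x} hxρ (Finset.mem_singleton_self x))

lemma blockWeight_addToBlock_empty (σ : ℝ) (h : IsPartOn s ρ) (hx : x ∉ s) :
    blockWeight σ (addToBlock ρ x ∅) = blockWeight σ ρ := by
  rw [addToBlock_empty h.2.1, blockWeight, Finset.prod_insert fun hxρ =>
    hx (h.1 {x} hxρ (Finset.mem_singleton_self x))]
  simp [risingFac_zero, blockWeight]

lemma insert_notMem_erase (h : IsPartOn s ρ) (hx : x ∉ s) (C : Finset α) :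
    insert x C ∉ ρ.erase C := fun hmem =>
  hx (h.1 _ (Finset.mem_of_mem_erase hmem) (Finset.mem_insert_self x C))

lemma card_addToBlock (h : IsPartOn s ρ) (hx : x ∉ s) {C : Finset α} (hC : C ∈ ρ) :
    (addToBlock ρ x C).card = ρ.card := by
  rw [addToBlock, Finset.card_insert_of_notMem (insert_notMem_erase h hx C),
    Finset.card_erase_add_one hC]

lemma blockWeight_addToBlock (σ : ℝ) (h : IsPartOn s ρ) (hx : x ∉ s) {C : Finset α}
    (hC : C ∈ ρ) :
    blockWeight σ (addToBlock ρ x C) = ((C.card : ℝ) - σ) * blockWeight σ ρ := by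
  have hCpos := (h.nonempty_of_mem hC).card_pos
  have hcard : (insert x C).card - 1 = (C.card - 1) + 1 := by
    rw [Finset.card_insert_of_notMem fun hxC => hx (h.1 C hC hxC)]
    omega
  rw [addToBlock, blockWeight, blockWeight, Finset.prod_insert (insert_notMem_erase h hx C),
    ← Finset.mul_prod_erase ρ _ hC, ← mul_assoc, hcard, risingFac_succ,
    Nat.cast_sub hCpos]
  push_cast
  ring

lemma subset_addToBlock_iff {F : Finset (Finset α)} (hF : ∀ D ∈ F, x ∉ D) (C : Finset α) :
    F ⊆ addToBlock ρ x C ↔ F ⊆ ρ ∧ C ∉ F := by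
  constructor
  · intro hsub
    have hmem : ∀ D ∈ F, D ∈ ρ.erase C := fun D hD =>
      (Finset.mem_insert.mp (hsub hD)).resolve_left fun hDC =>
        hF D hD (hDC ▸ Finset.mem_insert_self x C)
    exact ⟨fun D hD => Finset.mem_of_mem_erase (hmem D hD),
      fun hCF => Finset.notMem_erase C ρ (hmem C hCF)⟩
  · rintro ⟨hsub, hCF⟩ D hD
    exact Finset.mem_insert_of_mem
      (Finset.mem_erase.mpr ⟨fun hDC => hCF (hDC ▸ hD), hsub hD⟩)

variable [Fintype α]

def extendingParts (u t : Finset α) (π F : Finset (Finset α)) : Finset (Finset (Finset α)) :=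
  (partsOn u).filter fun ρ => restrictPart ρ t = π ∧ F ⊆ ρ

lemma extendingParts_self {t : Finset α} {π F : Finset (Finset α)} (hπ : IsPartOn t π)
    (hF : F ⊆ π) : extendingParts t t π F = {π} := by
  ext ρ
  simp only [extendingParts, Finset.mem_filter, mem_partsOn, Finset.mem_singleton]
  constructor
  · rintro ⟨hρ, hres, -⟩
    rw [← hres, restrictPart_self hρ]
  · rintro rfl
    exact ⟨hπ, restrictPart_self hπ, hF⟩

/-- An extension to `insert x u` comes from one to `u` by opening the block `{x}`, or by adding
`x` to a block `C ∉ F`, which multiplies the weight by `|C| - σ`; these factors add up to the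
coefficient of `G ρ.card`. -/
lemma sum_extendingParts_insert (σ : ℝ) {u t : Finset α} {π F : Finset (Finset α)}
    (hxu : x ∉ u) (hxt : x ∉ t) (hF : ∀ D ∈ F, x ∉ D) (G : ℕ → ℝ) :
    ∑ ρ ∈ extendingParts (insert x u) t π F, G ρ.card * blockWeight σ ρ =
      ∑ ρ ∈ extendingParts u t π F,
        (G (ρ.card + 1) + ((u.card : ℝ) - ∑ D ∈ F, (D.card : ℝ) -
          ((ρ.card : ℝ) - F.card) * σ) * G ρ.card) * blockWeight σ ρ := by
  simp only [extendingParts, Finset.sum_filter]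
  rw [sum_partsOn_insert hxu]
  refine Finset.sum_congr rfl fun ρ hρ => ?_
  have h := mem_partsOn.mp hρ
  have hcond : ∀ C ∈ insert ∅ ρ, (restrictPart (addToBlock ρ x C) t = π ∧
      F ⊆ addToBlock ρ x C) ↔ ((restrictPart ρ t = π ∧ F ⊆ ρ) ∧ C ∉ F) := fun C hC => by
    rw [restrictPart_addToBlock h.2.1 hxt hC, subset_addToBlock_iff hF, and_assoc]
  rw [Finset.sum_congr rfl fun C hC => if_congr (hcond C hC) rfl rfl]
  split_ifs with hρc
  · have hempty : (∅ : Finset α) ∉ F := fun h0 => h.2.1 (hρc.2 h0)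
    rw [Finset.sum_congr rfl fun C _ => if_congr (and_iff_right hρc) rfl rfl,
      Finset.sum_insert h.2.1, if_pos hempty, card_addToBlock_empty h hxu,
      blockWeight_addToBlock_empty σ h hxu, ← Finset.sum_filter]
    have hfree : ∑ C ∈ ρ.filter (· ∉ F), ((C.card : ℝ) - σ) =
        (u.card : ℝ) - ∑ D ∈ F, (D.card : ℝ) - ((ρ.card : ℝ) - F.card) * σ := by
      rw [← Finset.sdiff_eq_filter,
        eq_sub_of_add_eq (Finset.sum_sdiff (f := fun C => (C.card : ℝ) - σ) hρc.2)]
      simp only [Finset.sum_sub_distrib, Finset.sum_const, nsmul_eq_mul]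
      rw [← Nat.cast_sum, h.sum_card]
      ring
    rw [Finset.sum_congr rfl fun C hC => by
        rw [card_addToBlock h hxu (Finset.mem_filter.mp hC).1,
          blockWeight_addToBlock σ h hxu (Finset.mem_filter.mp hC).1, mul_left_comm,
          ← mul_assoc],
      ← Finset.sum_mul, ← Finset.sum_mul, hfree]
    ring
  · exact Finset.sum_eq_zero fun C _ => if_neg fun hc => hρc hc.1

end Extensions

section GeneralizedFactorial

lemma gfc_zero_zero (σ γ : ℝ) : gfc 0 0 σ γ = 1 := by
  simp [gfc, risingFac]

lemma gfc_zero_succ (k : ℕ) (σ γ : ℝ) : gfc 0 (k + 1) σ γ = 0 := by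
  have halt : ∑ i ∈ Finset.range (k + 2), (-1 : ℝ) ^ i * ((k + 1).choose i : ℝ) = 0 := by
    exact_mod_cast (Int.alternating_sum_range_choose (n := k + 1)).trans
      (if_neg (Nat.succ_ne_zero k))
  simp [gfc, risingFac_zero, halt]

lemma gfc_succ_zero (m : ℕ) (σ γ : ℝ) : gfc (m + 1) 0 σ γ = ((m : ℝ) - γ) * gfc m 0 σ γ := by
  simp only [gfc, zero_add, Finset.sum_range_one, risingFac_succ]
  push_cast
  ring

lemma gfc_succ_succ (m k : ℕ) (σ γ : ℝ) :
    gfc (m + 1) (k + 1) σ γ =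
      ((m : ℝ) - γ - ((k : ℝ) + 1) * σ) * gfc m (k + 1) σ γ + σ * gfc m k σ γ := by
  have hpascal : ∀ i ∈ Finset.range (k + 2),
      ((k + 1).choose i : ℝ) * ((k : ℝ) + 1 - i) = ((k : ℝ) + 1) * (k.choose i : ℝ) := by
    intro i hi
    have hcast := congrArg (fun z : ℕ => (z : ℝ)) (Nat.choose_mul_succ_eq k i)
    push_cast [Nat.cast_sub (Nat.lt_succ_iff.mp (Finset.mem_range.mp hi))] at hcast
    linarith
  have hsum : ∑ i ∈ Finset.range (k + 2),
      (-1 : ℝ) ^ i * ((k + 1).choose i : ℝ) * risingFac (-(i : ℝ) * σ - γ) (m + 1) =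
      ((m : ℝ) - γ - ((k : ℝ) + 1) * σ) * ∑ i ∈ Finset.range (k + 2),
          (-1 : ℝ) ^ i * ((k + 1).choose i : ℝ) * risingFac (-(i : ℝ) * σ - γ) m +
        ((k : ℝ) + 1) * σ * ∑ i ∈ Finset.range (k + 1),
          (-1 : ℝ) ^ i * (k.choose i : ℝ) * risingFac (-(i : ℝ) * σ - γ) m := by
    have hext : ∑ i ∈ Finset.range (k + 1),
        (-1 : ℝ) ^ i * (k.choose i : ℝ) * risingFac (-(i : ℝ) * σ - γ) m =
        ∑ i ∈ Finset.range (k + 2),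
          (-1 : ℝ) ^ i * (k.choose i : ℝ) * risingFac (-(i : ℝ) * σ - γ) m := by
      rw [Finset.sum_range_succ _ (k + 1), Nat.choose_eq_zero_of_lt (Nat.lt_succ_self k)]
      simp
    rw [hext, Finset.mul_sum, Finset.mul_sum, ← Finset.sum_add_distrib]
    refine Finset.sum_congr rfl fun i hi => ?_
    rw [risingFac_succ]
    linear_combination ((-1 : ℝ) ^ i * risingFac (-(i : ℝ) * σ - γ) m * σ) * hpascal i hi
  have hfac : (((k + 1).factorial : ℕ) : ℝ) = ((k : ℝ) + 1) * (k.factorial : ℝ) := by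
    push_cast [Nat.factorial_succ]
    ring
  simp only [gfc]
  rw [hsum, hfac]
  field_simp

/-- `scaledGfc σ a m k = C(m,k;σ,−a)/σ^k` (`scaledGfc_mul_pow`): the recursion is the one
obtained by adding a new element to a partition, and it stays meaningful at `σ = 0`. -/
def scaledGfc (σ a : ℝ) : ℕ → ℕ → ℝ
  | 0, 0 => 1
  | 0, _ + 1 => 0
  | m + 1, 0 => (a + m) * scaledGfc σ a m 0
  | m + 1, k + 1 => (a + m - (k + 1) * σ) * scaledGfc σ a m (k + 1) + scaledGfc σ a m k

lemma scaledGfc_mul_pow (σ a : ℝ) (m k : ℕ) : scaledGfc σ a m k * σ ^ k = gfc m k σ (-a) := by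
  induction m generalizing k with
  | zero => cases k <;> simp [scaledGfc, gfc_zero_zero, gfc_zero_succ]
  | succ m ih =>
    cases k with
    | zero =>
      rw [gfc_succ_zero, ← ih 0]
      simp only [scaledGfc]
      ring
    | succ k =>
      rw [gfc_succ_succ, ← ih (k + 1), ← ih k]
      simp only [scaledGfc]
      ring

lemma scaledGfc_eq_zero_of_lt (σ a : ℝ) {m k : ℕ} (h : m < k) : scaledGfc σ a m k = 0 := by
  induction m generalizing k with
  | zero => obtain ⟨k, rfl⟩ := Nat.exists_eq_add_one.mpr h; rfl
  | succ m ih =>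
    obtain ⟨k, rfl⟩ := Nat.exists_eq_add_one.mpr (Nat.zero_lt_of_lt h)
    simp only [scaledGfc, ih (by omega : m < k + 1), ih (by omega : m < k), mul_zero, add_zero]

lemma sum_mul_scaledGfc_succ (σ a : ℝ) (m : ℕ) (g : ℕ → ℝ) :
    ∑ k ∈ Finset.range (m + 2), g k * scaledGfc σ a (m + 1) k =
      ∑ k ∈ Finset.range (m + 1), (g (k + 1) + (a + m - k * σ) * g k) * scaledGfc σ a m k := by
  set h : ℕ → ℝ := fun k => (a + m - k * σ) * g k * scaledGfc σ a m k with hh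
  have hshift : ∑ k ∈ Finset.range (m + 1), h k =
      ∑ k ∈ Finset.range (m + 1), h (k + 1) + h 0 := by
    rw [← Finset.sum_range_succ', Finset.sum_range_succ _ (m + 1),
      show h (m + 1) = 0 by simp [h, scaledGfc_eq_zero_of_lt σ a (Nat.lt_succ_self m)], add_zero]
  calc ∑ k ∈ Finset.range (m + 2), g k * scaledGfc σ a (m + 1) k
      = ∑ k ∈ Finset.range (m + 1), (g (k + 1) * scaledGfc σ a m k + h (k + 1)) + h 0 := by
        rw [Finset.sum_range_succ']
        congr 1
        · refine Finset.sum_congr rfl fun k _ => ?_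
          simp only [scaledGfc, hh]
          push_cast
          ring
        · simp only [scaledGfc, hh]
          push_cast
          ring
    _ = _ := by
        rw [Finset.sum_add_distrib, add_assoc, ← hshift, ← Finset.sum_add_distrib]
        exact Finset.sum_congr rfl fun k _ => by simp only [hh]; ring

lemma scaledGfc_eq_gfc_div {σ : ℝ} (hσ : σ ≠ 0) (a : ℝ) (m k : ℕ) :
    scaledGfc σ a m k = gfc m k σ (-a) / σ ^ k := by
  rw [eq_div_iff (pow_ne_zero k hσ), scaledGfc_mul_pow]

end GeneralizedFactorial

section Marginals

variable {α : Type*} [DecidableEq α] [Fintype α] {t : Finset α} {π : Finset (Finset α)}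

lemma sum_extendingParts_gibbsW (σ : ℝ) (V : ℕ → ℕ → ℝ)
    (hVrec : ∀ N k, 1 ≤ k → k ≤ N →
      V N k = V (N + 1) (k + 1) + ((N : ℝ) - (k : ℝ) * σ) * V (N + 1) k)
    (hπ : IsPartOn t π) (ht : t.Nonempty) {S : Finset α} (hS : Disjoint t S) :
    ∑ ρ ∈ extendingParts (t ∪ S) t π ∅, gibbsW σ (V (t.card + S.card)) ρ =
      gibbsW σ (V t.card) π := by
  induction S using Finset.induction_on with
  | empty =>
    rw [Finset.union_empty, extendingParts_self hπ (Finset.empty_subset π),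
      Finset.sum_singleton, Finset.card_empty, add_zero]
  | @insert x S hxS ih =>
    have hxt : x ∉ t := Finset.disjoint_right.mp hS (Finset.mem_insert_self x S)
    have hS' : Disjoint t S := hS.mono_right (Finset.subset_insert x S)
    have hxu : x ∉ t ∪ S := by simp [hxt, hxS]
    have hcard : (t ∪ S).card = t.card + S.card := Finset.card_union_of_disjoint hS'
    simp only [gibbsW_eq_mul_blockWeight] at ih ⊢
    rw [Finset.union_insert, Finset.card_insert_of_notMem hxS, ← add_assoc,
      sum_extendingParts_insert σ hxu hxt (fun D hD => absurd hD (Finset.notMem_empty D)),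
      ← ih hS']
    refine Finset.sum_congr rfl fun ρ hρ => ?_
    have h := mem_partsOn.mp (Finset.mem_filter.mp hρ).1
    rw [hVrec (t.card + S.card) ρ.card (h.card_pos (ht.mono Finset.subset_union_left))
      (hcard ▸ h.card_le), hcard]
    simp

/-- As `G` is arbitrary, this says that the extensions of `π` to `S` keeping the blocks `F` and
having `|π| + k` blocks have total weight `blockWeight σ π * scaledGfc σ a |S| k`. -/
lemma sum_extendingParts_card (σ : ℝ) (hπ : IsPartOn t π) {F : Finset (Finset α)} (hF : F ⊆ π)
    {S : Finset α} (hS : Disjoint t S) (G : ℕ → ℝ) :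
    ∑ ρ ∈ extendingParts (t ∪ S) t π F, G ρ.card * blockWeight σ ρ =
      blockWeight σ π * ∑ k ∈ Finset.range (S.card + 1), G (π.card + k) *
        scaledGfc σ (t.card - ∑ D ∈ F, (D.card : ℝ) - ((π.card : ℝ) - F.card) * σ) S.card k := by
  induction S using Finset.induction_on generalizing G with
  | empty =>
    rw [Finset.union_empty, extendingParts_self hπ hF, Finset.sum_singleton]
    simp [scaledGfc, mul_comm]
  | @insert x S hxS ih =>
    have hxt : x ∉ t := Finset.disjoint_right.mp hS (Finset.mem_insert_self x S)
    have hS' : Disjoint t S := hS.mono_right (Finset.subset_insert x S)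
    have hxu : x ∉ t ∪ S := by simp [hxt, hxS]
    rw [Finset.union_insert, sum_extendingParts_insert σ hxu hxt
      (fun D hD hxD => hxt (hπ.1 D (hF hD) hxD)) G]
    refine (ih hS' fun r => G (r + 1) + ((t ∪ S).card - ∑ D ∈ F, (D.card : ℝ) -
      ((r : ℝ) - F.card) * σ) * G r).trans ?_
    rw [Finset.card_insert_of_notMem hxS, sum_mul_scaledGfc_succ,
      Finset.card_union_of_disjoint hS']
    refine congrArg _ (Finset.sum_congr rfl fun k _ => ?_)
    rw [← add_assoc]
    push_cast
    ring

end Marginals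

section Sampling

variable {n m : ℕ}

lemma card_oldSet : (oldSet n m).card = n := by
  simpa [oldSet] using Fin.card_filter_val_lt (n := n + m) (m := n)

lemma oldSet_nonempty (hn : 1 ≤ n) : (oldSet n m).Nonempty :=
  ⟨⟨0, by omega⟩, by simp [oldSet]; omega⟩

lemma card_compl_oldSet : (oldSet n m)ᶜ.card = m := by
  rw [Finset.card_compl, Fintype.card_fin, card_oldSet]
  omega

lemma extensions_eq_extendingParts (π : Finset (Finset (Fin (n + m)))) :
    extensions n m π = extendingParts (oldSet n m ∪ (oldSet n m)ᶜ) (oldSet n m) π ∅ := by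
  simp [extensions, extendingParts, partsOn, Finset.filter_filter]

lemma Scount_eq_zero_iff {π ρ : Finset (Finset (Fin (n + m)))} (hπ : IsPartOn (oldSet n m) π)
    (hρ : IsPartOn Finset.univ ρ) (hres : restrictPart ρ (oldSet n m) = π)
    {B : Finset (Fin (n + m))} (hB : B ∈ π) : Scount n m B ρ = 0 ↔ B ∈ ρ := by
  obtain ⟨b, hb⟩ := hπ.nonempty_of_mem hB
  constructor
  · intro h0
    obtain ⟨C, hC, hCB⟩ := Finset.mem_image.mp (Finset.mem_of_mem_erase (hres ▸ hB))
    have hBC : B ⊆ C := hCB ▸ Finset.inter_subset_left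
    have hCold : C ⊆ oldSet n m := by
      have := (Finset.sum_eq_zero_iff.mp h0) C (Finset.mem_filter.mpr ⟨hC, hBC⟩)
      rwa [Finset.card_eq_zero, Finset.sdiff_eq_empty_iff_subset] at this
    rwa [← hCB, Finset.inter_eq_left.mpr hCold]
  · intro hBρ
    refine Finset.sum_eq_zero fun C hC => ?_
    obtain ⟨hCρ, hBC⟩ := Finset.mem_filter.mp hC
    rw [← hρ.eq_of_mem_of_mem hBρ hCρ hb (hBC hb), Finset.card_eq_zero,
      Finset.sdiff_eq_empty_iff_subset]
    exact hπ.1 B hB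

variable {j : ℕ} {B : Fin j → Finset (Fin (n + m))}

lemma RcntB_eq_sub {ρ : Finset (Finset (Fin (n + m)))}
    (hπ : IsPartOn (oldSet n m) (Finset.image B Finset.univ))
    (hρ : ρ ∈ extensions n m (Finset.image B Finset.univ)) :
    (RcntB n m j B ρ : ℝ) = j - ∑ i : Fin j, if B i ∈ ρ then 1 else 0 := by
  obtain ⟨hρpart, hres⟩ := (Finset.mem_filter.mp hρ).2
  have hsplit := Finset.card_filter_add_card_filter_not (s := Finset.univ)
    (fun i : Fin j => B i ∈ ρ)
  rw [Finset.card_univ, Fintype.card_fin] at hsplit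
  have hfilter : (Finset.univ.filter fun i : Fin j => Scount n m (B i) ρ ≠ 0) =
      Finset.univ.filter fun i => B i ∉ ρ := Finset.filter_congr fun i _ =>
    not_congr (Scount_eq_zero_iff hπ hρpart hres (Finset.mem_image_of_mem B (Finset.mem_univ i)))
  rw [RcntB, Finset.sum_boole, hfilter, eq_sub_iff_add_eq, add_comm]
  exact_mod_cast hsplit

lemma condExpPi_RcntB {σ : ℝ} (hσ1 : σ < 1) {V : ℕ → ℕ → ℝ} (hn : 1 ≤ n)
    (hVrec : ∀ N k, 1 ≤ k → k ≤ N →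
      V N k = V (N + 1) (k + 1) + ((N : ℝ) - (k : ℝ) * σ) * V (N + 1) k)
    (hBinj : Function.Injective B) (hπ : IsPartOn (oldSet n m) (Finset.image B Finset.univ))
    (hVnj : 0 < V n j) :
    condExpPi σ V n m (Finset.image B Finset.univ) (fun ρ => (RcntB n m j B ρ : ℝ)) =
      j - ∑ i : Fin j, ∑ k ∈ Finset.range (m + 1), V (n + m) (j + k) / V n j *
        scaledGfc σ (n - (B i).card - ((j : ℝ) - 1) * σ) m k := by
  set π := Finset.image B Finset.univ
  set P := blockWeight σ π
  have hcardπ : π.card = j := by simp [π, Finset.card_image_of_injective _ hBinj]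
  have hden : ∑ ρ ∈ extensions n m π, gibbsW σ (V (n + m)) ρ = V n j * P := by
    have h := sum_extendingParts_gibbsW σ V hVrec hπ (oldSet_nonempty hn) disjoint_compl_right
    rwa [card_oldSet, card_compl_oldSet, gibbsW_eq_mul_blockWeight, hcardπ,
      ← extensions_eq_extendingParts] at h
  have hnum : ∀ i : Fin j,
      ∑ ρ ∈ extensions n m π, (if B i ∈ ρ then 1 else 0) * gibbsW σ (V (n + m)) ρ =
        P * ∑ k ∈ Finset.range (m + 1), V (n + m) (j + k) *
          scaledGfc σ (n - (B i).card - ((j : ℝ) - 1) * σ) m k := by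
    intro i
    have h := sum_extendingParts_card σ hπ
      (Finset.singleton_subset_iff.mpr (Finset.mem_image_of_mem B (Finset.mem_univ i)))
      disjoint_compl_right (V (n + m))
    rw [card_oldSet, card_compl_oldSet, hcardπ, Finset.sum_singleton,
      Finset.card_singleton, Nat.cast_one] at h
    have hfrozen : extendingParts (oldSet n m ∪ (oldSet n m)ᶜ) (oldSet n m) π {B i} =
        (extensions n m π).filter (B i ∈ ·) := by
      simp [extensions_eq_extendingParts, extendingParts, Finset.filter_filter]
    rw [hfrozen, Finset.sum_filter] at h
    simpa only [boole_mul, gibbsW_eq_mul_blockWeight] using h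
  have hnumer : ∑ ρ ∈ extensions n m π, (RcntB n m j B ρ : ℝ) * gibbsW σ (V (n + m)) ρ =
      j * (V n j * P) - P * ∑ i : Fin j, ∑ k ∈ Finset.range (m + 1), V (n + m) (j + k) *
        scaledGfc σ (n - (B i).card - ((j : ℝ) - 1) * σ) m k := by
    rw [Finset.sum_congr rfl fun ρ hρ => by rw [RcntB_eq_sub hπ hρ, sub_mul, Finset.sum_mul],
      Finset.sum_sub_distrib, ← Finset.mul_sum, hden, Finset.sum_comm,
      Finset.sum_congr rfl fun i _ => hnum i, ← Finset.mul_sum]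
  have hP : P ≠ 0 := (blockWeight_pos hσ1 π).ne'
  rw [condExpPi, hnumer, hden, sub_div, mul_div_cancel_right₀ _ (mul_ne_zero hVnj.ne' hP),
    mul_comm P, mul_div_mul_right _ _ hP]
  simp only [Finset.sum_div, div_mul_eq_mul_div]

end Sampling

theorem looking_backward_estimator_complete_general
    (n m j : ℕ) (hn : 1 ≤ n)
    (σ : ℝ) (hσ1 : σ < 1) (hσ0 : σ ≠ 0)
    (V : ℕ → ℕ → ℝ)
    (hVrec : ∀ N k, 1 ≤ k → k ≤ N →
      V N k = V (N + 1) (k + 1) + ((N : ℝ) - (k : ℝ) * σ) * V (N + 1) k)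
    (B : Fin j → Finset (Fin (n + m))) (hBinj : Function.Injective B)
    (hπ : IsPartOn (oldSet n m) (Finset.image B Finset.univ))
    (hVnj : 0 < V n j) :
    condExpPi σ V n m (Finset.image B Finset.univ)
        (fun ρ => (RcntB n m j B ρ : ℝ)) =
      (j : ℝ) -
        ∑ i ∈ Finset.Icc 1 n,
          ((Finset.univ.filter fun ℓ : Fin j => (B ℓ).card = i).card : ℝ) *
            ∑ k ∈ Finset.range (m + 1),
              V (n + m) (j + k) / V n j *
                (gfc m k σ (-(n : ℝ) + (i : ℝ) + ((j : ℝ) - 1) * σ) / σ ^ k) := by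
  have hsizes : ∀ ℓ ∈ (Finset.univ : Finset (Fin j)), (B ℓ).card ∈ Finset.Icc 1 n := by
    intro ℓ _
    have hℓ := Finset.mem_image_of_mem B (Finset.mem_univ ℓ)
    exact Finset.mem_Icc.mpr ⟨(hπ.nonempty_of_mem hℓ).card_pos,
      (Finset.card_le_card (hπ.1 _ hℓ)).trans_eq card_oldSet⟩
  rw [condExpPi_RcntB hσ1 hn hVrec hBinj hπ hVnj, sum_eq_sum_card_fiber_mul hsizes
    fun b => ∑ k ∈ Finset.range (m + 1), V (n + m) (j + k) / V n j *
      scaledGfc σ (n - b - ((j : ℝ) - 1) * σ) m k]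
  refine congrArg _ (Finset.sum_congr rfl fun b _ => ?_)
  congr 1
  refine Finset.sum_congr rfl fun k _ => ?_
  rw [scaledGfc_eq_gfc_div hσ0]
  congr 3
  ring

/-- expected number of re-observed old species, given complete information. -/
theorem looking_backward_estimator_complete
    (n m j : ℕ) (hn : 1 ≤ n) (hm : 1 ≤ m)
    (σ : ℝ) (hσ1 : σ < 1) (hσ0 : σ ≠ 0)
    (V : ℕ → ℕ → ℝ) (hV11 : V 1 1 = 1)
    (hVnn : ∀ N k, 1 ≤ k → k ≤ N → 0 ≤ V N k)
    (hVrec : ∀ N k, 1 ≤ k → k ≤ N →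
      V N k = V (N + 1) (k + 1) + ((N : ℝ) - (k : ℝ) * σ) * V (N + 1) k)
    (B : Fin j → Finset (Fin (n + m))) (hBinj : Function.Injective B)
    (hπ : IsPartOn (oldSet n m) (Finset.image B Finset.univ))
    (hVnj : 0 < V n j) :
    condExpPi σ V n m (Finset.image B Finset.univ)
        (fun ρ => (RcntB n m j B ρ : ℝ)) =
      (j : ℝ) -
        ∑ i ∈ Finset.Icc 1 n,
          ((Finset.univ.filter fun ℓ : Fin j => (B ℓ).card = i).card : ℝ) *
            ∑ k ∈ Finset.range (m + 1),
              V (n + m) (j + k) / V n j *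
                (gfc m k σ (-(n : ℝ) + (i : ℝ) + ((j : ℝ) - 1) * σ) / σ ^ k) :=
  looking_backward_estimator_complete_general n m j hn σ hσ1 hσ0 V hVrec B hBinj hπ hVnj
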